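/- arXiv:2109.09816 — 2 statements merged into one kernel-verified Lean document; each statement's English description precedes it below -/
import Mathlib

section
/- Truncated normal mean lower bound: for every c ≥ 0, the truncated standard normal mean below -c satisfies E[z | z < -c] + c ≥ -√(2/π); that is, (∫_{-∞}^{-c} (z + c) φ(z) dz) / Φ(-c) ≥ -√(2/π). -/
open MeasureTheory ProbabilityTheory Set Filter

noncomputable section

/-- Standard normal density. -/
def stdPdf (z : ℝ) : ℝ := Real.exp (-z ^ 2 / 2) / Real.sqrt (2 * Real.pi)

/-- Standard normal cdf. -/
def stdCdf (c : ℝ) : ℝ := ∫ z in Set.Iio c, stdPdf z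

/-- Mean of a standard normal truncated to `(c, ∞)`. -/
def truncMeanAbove (c : ℝ) : ℝ :=
  (∫ z in Set.Ioi c, z * stdPdf z) / (∫ z in Set.Ioi c, stdPdf z)

/-- Mean of a standard normal truncated to `(-∞, c)`. -/
def truncMeanBelow (c : ℝ) : ℝ :=
  (∫ z in Set.Iio c, z * stdPdf z) / (∫ z in Set.Iio c, stdPdf z)

/-- Mean of a standard normal truncated to `(a, b)`. -/
def truncMeanBetween (a b : ℝ) : ℝ :=
  (∫ z in Set.Ioo a b, z * stdPdf z) / (∫ z in Set.Ioo a b, stdPdf z)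

/-- Signum, with the (measure-zero) value at `0` set to `-1`. -/
def sgn (x : ℝ) : ℝ := if 0 < x then 1 else -1

/-- The standard normal measure on `ℝ`. -/
def stdNormal : Measure ℝ := gaussianReal 0 1

/-- The joint law of two independent standard normals. -/
def stdNormal2 : Measure (ℝ × ℝ) := stdNormal.prod stdNormal

/-- Uniform measure on `[-1, 1]` (the prior on the state θ). -/
def uniformState : Measure ℝ := (2 : ENNReal)⁻¹ • volume.restrict (Set.Icc (-1 : ℝ) 1)

instance : IsProbabilityMeasure stdNormal := by unfold stdNormal; infer_instance
instance : IsProbabilityMeasure stdNormal2 := by unfold stdNormal2; infer_instance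

namespace TN

lemma sqrt2pi_pos : 0 < Real.sqrt (2 * Real.pi) := Real.sqrt_pos.2 (by positivity)

lemma stdPdf_eq : stdPdf = fun z => Real.exp (-(1/2) * z ^ 2) / Real.sqrt (2 * Real.pi) := by
  funext z; unfold stdPdf; ring_nf

lemma stdPdf_pos (z : ℝ) : 0 < stdPdf z := by
  unfold stdPdf
  have := sqrt2pi_pos
  positivity

lemma stdPdf_even (z : ℝ) : stdPdf (-z) = stdPdf z := by
  unfold stdPdf; rw [neg_pow]; norm_num

lemma stdPdf_cont : Continuous stdPdf := by
  unfold stdPdf; fun_prop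

lemma stdPdf_le (z : ℝ) : stdPdf z ≤ stdPdf 0 := by
  unfold stdPdf
  rw [div_le_div_iff_of_pos_right sqrt2pi_pos]
  exact Real.exp_le_exp.2 (by nlinarith [sq_nonneg z])

lemma integrable_stdPdf : Integrable stdPdf := by
  rw [stdPdf_eq]
  exact (integrable_exp_neg_mul_sq (by norm_num : (0:ℝ) < 1/2)).div_const _

lemma integral_stdPdf : ∫ z, stdPdf z = 1 := by
  rw [stdPdf_eq]
  rw [integral_div, integral_gaussian]
  rw [div_eq_one_iff_eq (by positivity)]
  rw [show Real.pi / (1/2) = 2 * Real.pi by ring]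

lemma integrable_id_stdPdf : Integrable (fun z => z * stdPdf z) := by
  have h := (integrable_mul_exp_neg_mul_sq (by norm_num : (0:ℝ) < 1/2)).div_const
    (Real.sqrt (2 * Real.pi))
  refine h.congr ?_
  filter_upwards with z
  unfold stdPdf; ring_nf

lemma stdCdf_pos (b : ℝ) : 0 < stdCdf b := by
  unfold stdCdf
  rw [setIntegral_pos_iff_support_of_nonneg_ae
    (Filter.Eventually.of_forall (fun z => (stdPdf_pos z).le)) integrable_stdPdf.integrableOn]
  have hs : Function.support stdPdf = univ := by
    ext z; simp [Function.mem_support, (stdPdf_pos z).ne']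
  rw [hs, univ_inter]
  exact MeasureTheory.Measure.measure_Iio_pos volume b

end TN

namespace TN

lemma hasDerivAt_neg_stdPdf (z : ℝ) : HasDerivAt (fun x => -stdPdf x) (z * stdPdf z) z := by
  have h1 : HasDerivAt (fun x : ℝ => -x ^ 2 / 2) (-(↑2 * z ^ 1) / 2) z :=
    ((hasDerivAt_pow 2 z).neg).div_const 2
  have h3 := ((h1.exp).div_const (Real.sqrt (2 * Real.pi))).neg
  refine h3.congr_deriv ?_
  unfold stdPdf; ring

lemma hasDerivAt_stdPdf (z : ℝ) : HasDerivAt stdPdf (-(z * stdPdf z)) z := by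
  simpa [Pi.neg_def] using (hasDerivAt_neg_stdPdf z).neg

lemma tendsto_stdPdf_atBot : Tendsto stdPdf atBot (nhds 0) := by
  have hsq : Tendsto (fun z : ℝ => z ^ 2) atBot atTop := by
    refine (tendsto_id.atBot_mul_atBot₀ tendsto_id).congr fun z => ?_
    simp [sq]
  have h1 : Tendsto (fun z : ℝ => -z ^ 2 / 2) atBot atBot := by
    refine Tendsto.atBot_div_const (by norm_num) ?_
    exact tendsto_neg_atTop_atBot.comp hsq
  have h2 : Tendsto stdPdf atBot (nhds (0 / Real.sqrt (2 * Real.pi))) := by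
    exact (Real.tendsto_exp_atBot.comp h1).div_const _
  simpa using h2

lemma integral_Iio_id_stdPdf (b : ℝ) : ∫ z in Iio b, z * stdPdf z = -stdPdf b := by
  rw [← integral_Iic_eq_integral_Iio]
  have ht : Tendsto (fun x => -stdPdf x) atBot (nhds 0) := by
    simpa using tendsto_stdPdf_atBot.neg
  have := integral_Iic_of_hasDerivAt_of_tendsto' (a := b) (m := 0)
    (fun x _ => hasDerivAt_neg_stdPdf x) integrable_id_stdPdf.integrableOn ht
  simpa using this

lemma stdCdf_sub (x : ℝ) : stdCdf x = stdCdf 0 + ∫ t in (0:ℝ)..x, stdPdf t := by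
  unfold stdCdf
  rw [← integral_Iic_eq_integral_Iio, ← integral_Iic_eq_integral_Iio (x := 0),
    ← intervalIntegral.integral_Iic_sub_Iic integrable_stdPdf.integrableOn
      integrable_stdPdf.integrableOn]
  ring

lemma hasDerivAt_stdCdf (x : ℝ) : HasDerivAt stdCdf (stdPdf x) x := by
  have h : HasDerivAt (fun u => ∫ t in (0:ℝ)..u, stdPdf t) (stdPdf x) x :=
    intervalIntegral.integral_hasDerivAt_right (stdPdf_cont.intervalIntegrable 0 x)
      (stdPdf_cont.stronglyMeasurableAtFilter volume (nhds x)) stdPdf_cont.continuousAt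
  have h2 := h.const_add (stdCdf 0)
  exact h2.congr_of_eventuallyEq (Filter.Eventually.of_forall fun u => stdCdf_sub u)

lemma stdCdf_cont : Continuous stdCdf :=
  continuous_iff_continuousAt.2 fun x => (hasDerivAt_stdCdf x).continuousAt

lemma stdCdf_zero : stdCdf 0 = 1 / 2 := by
  have h1 : ∫ z in Ioi (0:ℝ), stdPdf z = stdCdf 0 := by
    calc ∫ z in Ioi (0:ℝ), stdPdf z = ∫ z in Ioi (0:ℝ), stdPdf (-z) := by
          simp_rw [stdPdf_even]
      _ = ∫ z in Iic (0:ℝ), stdPdf z := by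
          simpa using integral_comp_neg_Ioi 0 stdPdf
      _ = stdCdf 0 := integral_Iic_eq_integral_Iio
  have h2 := intervalIntegral.integral_Iic_add_Ioi (b := (0:ℝ))
    integrable_stdPdf.integrableOn integrable_stdPdf.integrableOn
  rw [integral_stdPdf, integral_Iic_eq_integral_Iio] at h2
  unfold stdCdf at *
  linarith

end TN

namespace TN

lemma key (c : ℝ) (hc : 0 ≤ c) : stdPdf c ≤ (c + Real.sqrt (2 / Real.pi)) * stdCdf (-c) := by
  set k := Real.sqrt (2 / Real.pi) with hk
  have hkpos : 0 < k := Real.sqrt_pos.2 (by positivity)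
  have hk2 : k ^ 2 = 2 / Real.pi := Real.sq_sqrt (by positivity)
  by_cases hcase : 1 - 2 / Real.pi ≤ k * c
  · -- tail case: compare with derivative of stdPdf z / (k - z)
    set D : ℝ → ℝ := fun z => stdPdf z * (1 - z * (k - z)) / (k - z) ^ 2 with hD
    have hDeriv : ∀ z : ℝ, z ≤ 0 →
        HasDerivAt (fun x => stdPdf x / (k - x)) (D z) z := by
      intro z hz
      have hkz : 0 < k - z := by linarith
      have h2 := (hasDerivAt_stdPdf z).div ((hasDerivAt_id z).const_sub k) hkz.ne'
      refine h2.congr_deriv ?_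
      rw [hD, id_eq]
      field_simp
      ring
    have hDle : ∀ z ∈ Iic (-c), D z ≤ stdPdf z := by
      intro z hz
      simp only [mem_Iic] at hz
      have hkz : 0 < k - z := by linarith
      rw [hD, div_le_iff₀ (by positivity)]
      have hkzle : k * z ≤ k * (-c) := mul_le_mul_of_nonneg_left hz hkpos.le
      nlinarith [stdPdf_pos z]
    have hDnn : ∀ z ∈ Iic (-c), 0 ≤ D z := by
      intro z hz
      simp only [mem_Iic] at hz
      have hkz : 0 < k - z := by linarith
      have hz0 : z ≤ 0 := by linarith
      have : 0 ≤ 1 - z * (k - z) := by nlinarith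
      rw [hD]
      exact div_nonneg (mul_nonneg (stdPdf_pos z).le this) (sq_nonneg _)
    have hIntD : IntegrableOn D (Iic (-c)) := by
      refine Integrable.mono integrable_stdPdf.integrableOn ?_ ?_
      · refine ContinuousOn.aestronglyMeasurable ?_ measurableSet_Iic
        intro z hz
        simp only [mem_Iic] at hz
        have hkz : (0:ℝ) < k - z := by linarith
        have hc1 : Continuous fun z : ℝ => stdPdf z * (1 - z * (k - z)) := by
          exact stdPdf_cont.mul (by fun_prop)
        have hc2 : Continuous fun z : ℝ => (k - z) ^ 2 := by fun_prop
        exact (hc1.continuousAt.div hc2.continuousAt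
          (pow_ne_zero 2 hkz.ne')).continuousWithinAt
      · rw [ae_restrict_iff' measurableSet_Iic]
        refine Filter.Eventually.of_forall fun z hz => ?_
        rw [Real.norm_eq_abs, Real.norm_eq_abs, abs_of_nonneg (hDnn z hz),
          abs_of_nonneg (stdPdf_pos z).le]
        exact hDle z hz
    have htend : Tendsto (fun x => stdPdf x / (k - x)) atBot (nhds 0) := by
      have h1 : Tendsto (fun x : ℝ => k - x) atBot atTop := by
        refine (Filter.tendsto_atTop_add_const_left atBot k
          tendsto_neg_atBot_atTop).congr fun x => ?_
        ring
      have := tendsto_stdPdf_atBot.mul h1.inv_tendsto_atTop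
      simpa [div_eq_mul_inv] using this
    have hFTC := integral_Iic_of_hasDerivAt_of_tendsto
      (f := fun x => stdPdf x / (k - x)) (f' := D) (a := -c) (m := 0)
      ((hDeriv (-c) (by linarith)).continuousAt.continuousWithinAt)
      (fun x hx => hDeriv x (by simp only [mem_Iio] at hx; linarith)) hIntD htend
    have hmono : ∫ z in Iic (-c), D z ≤ ∫ z in Iic (-c), stdPdf z :=
      setIntegral_mono_on hIntD integrable_stdPdf.integrableOn measurableSet_Iic hDle
    rw [hFTC, sub_zero, integral_Iic_eq_integral_Iio] at hmono
    have hH : stdPdf c / (k + c) ≤ stdCdf (-c) := by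
      have h := hmono
      simp only [stdPdf_even, sub_neg_eq_add] at h
      exact h
    rw [div_le_iff₀ (by linarith)] at hH
    calc stdPdf c ≤ stdCdf (-c) * (k + c) := hH
      _ = (c + k) * stdCdf (-c) := by ring
  · -- near-zero case: monotonicity of Q
    push_neg at hcase
    set Q : ℝ → ℝ := fun t => (t + k) * stdCdf (-t) - stdPdf t with hQdef
    have hQd : ∀ t : ℝ, HasDerivAt Q (stdCdf (-t) - k * stdPdf t) t := by
      intro t
      have h1 : HasDerivAt (fun t : ℝ => stdCdf (-t)) (-stdPdf t) t := by
        have h0 := (hasDerivAt_stdCdf (-t)).comp t ((hasDerivAt_id t).neg)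
        simpa [Function.comp_def, stdPdf_even] using h0
      have h2 := (((hasDerivAt_id t).add_const k).mul h1).sub (hasDerivAt_stdPdf t)
      refine h2.congr_deriv ?_
      simp only [id_eq]
      ring
    have hks : k * Real.sqrt (2 * Real.pi) = 2 := by
      rw [hk, ← Real.sqrt_mul (by positivity)]
      rw [show 2 / Real.pi * (2 * Real.pi) = 4 by field_simp; ring]
      rw [show (4:ℝ) = 2 ^ 2 by norm_num, Real.sqrt_sq (by norm_num)]
    have hp0 : stdPdf 0 = 1 / Real.sqrt (2 * Real.pi) := by
      unfold stdPdf; norm_num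
    have hQ'nn : ∀ t ∈ Icc 0 c, 0 ≤ stdCdf (-t) - k * stdPdf t := by
      intro t ht
      have h1 : stdCdf (-t) = stdCdf 0 - ∫ s in (-t)..(0:ℝ), stdPdf s := by
        rw [stdCdf_sub (-t), intervalIntegral.integral_symm]; ring
      have h2 : (∫ s in (-t)..(0:ℝ), stdPdf s) ≤ ∫ s in (-t)..(0:ℝ), stdPdf 0 :=
        intervalIntegral.integral_mono_on (by linarith [ht.1])
          (stdPdf_cont.intervalIntegrable _ _) intervalIntegrable_const
          (fun s _ => stdPdf_le s)
      rw [intervalIntegral.integral_const, smul_eq_mul] at h2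
      have hkt : k * t ≤ 1 - k ^ 2 := by
        have := mul_le_mul_of_nonneg_left ht.2 hkpos.le
        rw [hk2]; linarith
      have hpt : stdPdf t ≤ stdPdf 0 := stdPdf_le t
      have hs2 := sqrt2pi_pos
      rw [zero_sub, neg_neg] at h2
      have h3 : k * (t + k) ≤ k * (Real.sqrt (2 * Real.pi) / 2) := by nlinarith [hkt, hks]
      have h4 : t + k ≤ Real.sqrt (2 * Real.pi) / 2 := le_of_mul_le_mul_left h3 hkpos
      have h5 : k * stdPdf t ≤ k * (1 / Real.sqrt (2 * Real.pi)) :=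
        mul_le_mul_of_nonneg_left (by rw [← hp0]; exact hpt) hkpos.le
      have h6 : t * (1 / Real.sqrt (2 * Real.pi)) + k * (1 / Real.sqrt (2 * Real.pi))
          ≤ 1 / 2 := by
        rw [← add_mul, mul_one_div, div_le_iff₀ hs2]
        linarith
      rw [h1, stdCdf_zero]
      rw [hp0] at h2
      linarith
    have hQint := intervalIntegral.integral_eq_sub_of_hasDerivAt
      (f := Q) (f' := fun t => stdCdf (-t) - k * stdPdf t) (a := 0) (b := c)
      (fun t _ => hQd t)
      (((stdCdf_cont.comp continuous_neg).sub (continuous_const.mul stdPdf_cont)).intervalIntegrable 0 c)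
    have hnn : 0 ≤ ∫ t in (0:ℝ)..c, (stdCdf (-t) - k * stdPdf t) :=
      intervalIntegral.integral_nonneg hc hQ'nn
    have hQ0 : Q 0 = 0 := by
      simp only [hQdef, neg_zero, stdCdf_zero, zero_add, hp0]
      rw [sub_eq_zero, eq_div_iff sqrt2pi_pos.ne']
      nlinarith [hks]
    rw [hQint, hQ0, sub_zero] at hnn
    simp only [hQdef] at hnn
    linarith

theorem main : ∀ c : ℝ, 0 ≤ c →
    -Real.sqrt (2 / Real.pi) ≤
      (∫ z in Set.Iio (-c), (z + c) * stdPdf z) / stdCdf (-c) := by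
  intro c hc
  have hS : 0 < stdCdf (-c) := stdCdf_pos (-c)
  have hnum : (∫ z in Iio (-c), (z + c) * stdPdf z)
      = -stdPdf c + c * stdCdf (-c) := by
    have h1 : ∀ z : ℝ, (z + c) * stdPdf z = z * stdPdf z + c * stdPdf z := fun z => by ring
    simp_rw [h1]
    rw [integral_add integrable_id_stdPdf.integrableOn
      ((integrable_stdPdf.const_mul c).integrableOn), integral_const_mul,
      integral_Iio_id_stdPdf, stdPdf_even]
    rfl
  rw [hnum, le_div_iff₀ hS]
  nlinarith [key c hc]

end TN


/-- **Truncated normal mean lower bound.** For every `c ≥ 0`,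
`E[z | z < -c] + c ≥ -√(2/π)`. -/
theorem truncated_normal_mean_lower_bound :
    ∀ c : ℝ, 0 ≤ c →
      -Real.sqrt (2 / Real.pi) ≤
        (∫ z in Set.Iio (-c), (z + c) * stdPdf z) / stdCdf (-c) :=
  TN.main

end
end

section
/- Existence and uniqueness of the EvE threshold function: for every y > 0 there is a unique c ∈ ℝ with φ(c)/Φ(c) = y, and for every y > 0 there is a unique c ∈ ℝ with φ(c)/(1 - Φ(c)) = y; equivalently, the inverse Mills ratio c ↦ φ(c)/Φ(c) is a strictly monotone bijection from ℝ onto (0, ∞), and c ↦ φ(c)/(1 - Φ(c)) is a strictly monotone bijection from ℝ onto (0, ∞). -/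
open MeasureTheory ProbabilityTheory Set

noncomputable section

open Filter Topology

lemma stdPdf_pos (z : ℝ) : 0 < stdPdf z :=
  div_pos (Real.exp_pos _) (Real.sqrt_pos.2 (by positivity))

lemma continuous_stdPdf : Continuous stdPdf := by
  unfold stdPdf; fun_prop

lemma stdPdf_eq : stdPdf = fun x => Real.exp (-(1/2 : ℝ) * x ^ 2) / Real.sqrt (2 * Real.pi) := by
  funext x
  unfold stdPdf
  rw [show -x ^ 2 / 2 = -(1/2 : ℝ) * x ^ 2 by ring]

lemma integrable_stdPdf : Integrable stdPdf := by
  rw [stdPdf_eq]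
  exact (integrable_exp_neg_mul_sq (by norm_num)).div_const _

lemma integrable_mul_stdPdf : Integrable (fun z => z * stdPdf z) := by
  rw [stdPdf_eq]
  have := (integrable_mul_exp_neg_mul_sq (b := 1/2) (by norm_num)).div_const
    (Real.sqrt (2 * Real.pi))
  simpa [mul_div_assoc] using this

lemma integral_stdPdf : ∫ z, stdPdf z = 1 := by
  rw [stdPdf_eq]
  rw [integral_div, integral_gaussian]
  rw [show (Real.pi / (1/2 : ℝ)) = 2 * Real.pi by ring]
  exact div_self (by positivity)

lemma hasDerivAt_stdPdf (c : ℝ) : HasDerivAt stdPdf (-c * stdPdf c) c := by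
  have h : HasDerivAt (fun z : ℝ => -z ^ 2 / 2) (-c) c := by
    have h0 := ((hasDerivAt_pow 2 c).neg).div_const 2
    exact h0.congr_deriv (by ring)
  have h2 := h.exp.div_const (Real.sqrt (2 * Real.pi))
  unfold stdPdf
  exact h2.congr_deriv (by ring)

lemma setIntegral_stdPdf_pos {s : Set ℝ} (h : 0 < volume s) :
    0 < ∫ z in s, stdPdf z := by
  rw [setIntegral_pos_iff_support_of_nonneg_ae
    (Filter.Eventually.of_forall fun z => (stdPdf_pos z).le) integrable_stdPdf.integrableOn]
  have hsupp : Function.support stdPdf = univ := by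
    ext z; simp [Function.mem_support, (stdPdf_pos z).ne']
  simpa [hsupp]

lemma stdCdf_eq_Iic (c : ℝ) : stdCdf c = ∫ z in Set.Iic c, stdPdf z :=
  (integral_Iic_eq_integral_Iio).symm

lemma hasDerivAt_stdCdf (c : ℝ) : HasDerivAt stdCdf (stdPdf c) c := by
  have key : stdCdf = fun x => stdCdf 0 + ∫ t in (0:ℝ)..x, stdPdf t := by
    funext x
    have h := intervalIntegral.integral_Iic_sub_Iic (f := stdPdf) (μ := volume) (a := 0) (b := x)
      integrable_stdPdf.integrableOn integrable_stdPdf.integrableOn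
    rw [stdCdf_eq_Iic, stdCdf_eq_Iic]
    linarith
  rw [key]
  have := (continuous_stdPdf.integral_hasStrictDerivAt 0 c).hasDerivAt
  simpa using this

lemma continuous_stdCdf : Continuous stdCdf := by
  have h : Differentiable ℝ stdCdf := fun c => (hasDerivAt_stdCdf c).differentiableAt
  exact h.continuous

lemma strictMono_stdCdf : StrictMono stdCdf :=
  strictMono_of_hasDerivAt_pos hasDerivAt_stdCdf stdPdf_pos

lemma stdCdf_pos (c : ℝ) : 0 < stdCdf c :=
  setIntegral_stdPdf_pos (by simp)

lemma stdCdf_lt_one (c : ℝ) : stdCdf c < 1 := by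
  have h := intervalIntegral.integral_Iio_add_Ici (f := stdPdf) (μ := volume) (b := c)
    integrable_stdPdf.integrableOn integrable_stdPdf.integrableOn
  rw [integral_stdPdf] at h
  have h2 : 0 < ∫ z in Set.Ici c, stdPdf z := setIntegral_stdPdf_pos (by simp)
  unfold stdCdf
  linarith

lemma tendsto_sq_atTop_aux {l : Filter ℝ} (h : Tendsto (fun z : ℝ => z ^ 2) l atTop) :
    Tendsto stdPdf l (𝓝 0) := by
  have h2 : Tendsto (fun z : ℝ => -z ^ 2 / 2) l atBot := by
    have := tendsto_neg_atTop_atBot.comp (h.atTop_div_const two_pos)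
    exact this.congr fun z => by simp [Function.comp]; ring
  have h3 := Real.tendsto_exp_atBot.comp h2
  have h4 := h3.div_const (Real.sqrt (2 * Real.pi))
  unfold stdPdf
  simpa only [Function.comp_def, zero_div] using h4

lemma tendsto_stdPdf_atTop : Tendsto stdPdf atTop (𝓝 0) :=
  tendsto_sq_atTop_aux (tendsto_pow_atTop two_ne_zero)

lemma tendsto_stdPdf_atBot : Tendsto stdPdf atBot (𝓝 0) := by
  refine tendsto_sq_atTop_aux ?_
  have : Tendsto (fun z : ℝ => (-z) ^ 2) atBot atTop :=
    (tendsto_pow_atTop two_ne_zero).comp tendsto_neg_atBot_atTop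
  exact this.congr fun z => by ring

lemma integral_id_mul_stdPdf_Iio (c : ℝ) : ∫ z in Set.Iio c, z * stdPdf z = -stdPdf c := by
  rw [← integral_Iic_eq_integral_Iio]
  have hderiv : ∀ x ∈ Set.Iic c, HasDerivAt (fun z => -stdPdf z) (x * stdPdf x) x := by
    intro x _
    have := (hasDerivAt_stdPdf x).neg
    exact this.congr_deriv (by ring)
  have htend : Tendsto (fun z => -stdPdf z) atBot (𝓝 0) := by
    simpa using tendsto_stdPdf_atBot.neg
  have := integral_Iic_of_hasDerivAt_of_tendsto' hderiv
    integrable_mul_stdPdf.integrableOn htend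
  simpa using this

lemma mills_pos (c : ℝ) : 0 < c * stdCdf c + stdPdf c := by
  have h1 := integral_id_mul_stdPdf_Iio c
  have hint : Integrable (fun z => (c - z) * stdPdf z) := by
    refine ((integrable_stdPdf.const_mul c).sub integrable_mul_stdPdf).congr
      (Filter.Eventually.of_forall fun z => by simp only [Pi.sub_apply]; ring)
  have heq : c * stdCdf c + stdPdf c = ∫ z in Set.Iio c, (c - z) * stdPdf z := by
    have hsub : ∫ z in Set.Iio c, (c - z) * stdPdf z
        = (∫ z in Set.Iio c, c * stdPdf z) - ∫ z in Set.Iio c, z * stdPdf z := by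
      rw [← integral_sub ((integrable_stdPdf.const_mul c).integrableOn)
        integrable_mul_stdPdf.integrableOn]
      exact setIntegral_congr_fun measurableSet_Iio fun z _ => by ring
    rw [hsub, integral_const_mul, h1]
    unfold stdCdf
    ring
  rw [heq]
  rw [setIntegral_pos_iff_support_of_nonneg_ae ?hnn hint.integrableOn]
  case hnn =>
    filter_upwards [ae_restrict_mem measurableSet_Iio] with z hz
    exact mul_nonneg (by simp only [Set.mem_Iio] at hz; linarith) (stdPdf_pos z).le
  · have hsub : Set.Iio c ⊆ Function.support (fun z => (c - z) * stdPdf z) ∩ Set.Iio c :=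
      fun z hz => ⟨(mul_pos (sub_pos.2 hz) (stdPdf_pos z)).ne', hz⟩
    calc (0 : ENNReal) < volume (Set.Iio c) := by simp
      _ ≤ _ := measure_mono hsub

lemma stdPdf_neg (z : ℝ) : stdPdf (-z) = stdPdf z := by
  unfold stdPdf
  rw [neg_pow]
  norm_num

lemma one_sub_stdCdf (c : ℝ) : 1 - stdCdf c = stdCdf (-c) := by
  have h := intervalIntegral.integral_Iio_add_Ici (f := stdPdf) (μ := volume) (b := c)
    integrable_stdPdf.integrableOn integrable_stdPdf.integrableOn
  rw [integral_stdPdf] at h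
  have h2 : ∫ z in Set.Ici c, stdPdf z = stdCdf (-c) := by
    rw [integral_Ici_eq_integral_Ioi]
    have h3 := integral_comp_neg_Ioi c stdPdf
    simp_rw [stdPdf_neg] at h3
    rw [h3]
    exact (stdCdf_eq_Iic (-c)).symm
  have h' : stdCdf c + stdCdf (-c) = 1 := by
    rw [← h2]
    exact h
  linarith [h']

lemma millsRatio_existsUnique (y : ℝ) (hy : 0 < y) :
    ∃! c : ℝ, stdPdf c / stdCdf c = y := by
  have hderiv : ∀ c : ℝ, HasDerivAt (fun c => stdPdf c / stdCdf c)
      ((-c * stdPdf c * stdCdf c - stdPdf c * stdPdf c) / stdCdf c ^ 2) c :=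
    fun c => (hasDerivAt_stdPdf c).div (hasDerivAt_stdCdf c) (stdCdf_pos c).ne'
  have hanti : StrictAnti (fun c => stdPdf c / stdCdf c) := by
    refine strictAnti_of_hasDerivAt_neg hderiv fun c => ?_
    apply div_neg_of_neg_of_pos
    · nlinarith [mills_pos c, stdPdf_pos c, stdCdf_pos c]
    · exact pow_pos (stdCdf_pos c) 2
  have hcont : Continuous (fun c => stdPdf c / stdCdf c) :=
    continuous_stdPdf.div continuous_stdCdf fun c => (stdCdf_pos c).ne'
  set a : ℝ := -(y + 1) with ha_def
  have ha : y < stdPdf a / stdCdf a := by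
    have hm := mills_pos a
    have hp := stdCdf_pos a
    rw [lt_div_iff₀ hp]
    nlinarith
  have htop : Tendsto (fun b : ℝ => stdPdf b / stdCdf 0) atTop (𝓝 0) := by
    simpa using tendsto_stdPdf_atTop.div_const (stdCdf 0)
  obtain ⟨b, hby, hb0⟩ := ((htop.eventually_lt_const hy).and (eventually_ge_atTop (0:ℝ))).exists
  have hb : stdPdf b / stdCdf b < y := by
    refine lt_of_le_of_lt ?_ hby
    exact div_le_div_of_nonneg_left (stdPdf_pos b).le (stdCdf_pos 0)
      (strictMono_stdCdf.monotone hb0)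
  have hab : a ≤ b := by simp only [ha_def]; linarith
  obtain ⟨c, _, hc⟩ := intermediate_value_Icc' hab hcont.continuousOn ⟨hb.le, ha.le⟩
  exact ⟨c, hc, fun c' hc' => hanti.injective (hc'.trans hc.symm)⟩

/-- **Existence and uniqueness of the EvE threshold function.** For every `y > 0`
there is a unique real `c` with `φ c / Φ c = y`, and a unique real `c` with
`φ c / (1 - Φ c) = y`. -/
theorem inverse_mills_ratio_bijective :
    (∀ y : ℝ, 0 < y → ∃! c : ℝ, stdPdf c / stdCdf c = y) ∧
    (∀ y : ℝ, 0 < y → ∃! c : ℝ, stdPdf c / (1 - stdCdf c) = y) := by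
  refine ⟨millsRatio_existsUnique, fun y hy => ?_⟩
  obtain ⟨c, hc, hu⟩ := millsRatio_existsUnique y hy
  refine ⟨-c, ?_, fun c' hc' => ?_⟩
  · show stdPdf (-c) / (1 - stdCdf (-c)) = y
    rw [stdPdf_neg, one_sub_stdCdf, neg_neg]
    exact hc
  · have h : stdPdf (-c') / stdCdf (-c') = y := by
      rw [stdPdf_neg, ← one_sub_stdCdf]
      exact hc'
    have := hu (-c') h
    linarith

end
end
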